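/- arXiv:1104.5195 — 2 statements merged into one kernel-verified Lean document; each statement's English description precedes it below -/
import Mathlib

section
/- Let S_λ be a weighted shift on a directed tree T with weights λ = {λ_v}_{v∈V°} ⊆ ℂ. Then S_λ is densely defined (i.e., D(S_λ) is dense in ℓ²(V)) if and only if E ⊆ D(S_λ), where E is the linear span of {e_u : u ∈ V} (equivalently, e_u ∈ D(S_λ) for every u ∈ V). -/
open scoped ENNReal NNReal Classical

noncomputable section

/-- A directed tree: a directed graph with nonempty vertex set in which each vertex has
at most one parent, there are no circuits, and the underlying undirected graph is
connected and has no cycles (i.e. is a tree). -/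
structure DirectedTree (V : Type) where
  edge : V → V → Prop
  nonempty : Nonempty V
  antisymm : ∀ u v : V, edge u v → ¬ edge v u
  parent_unique : ∀ u v w : V, edge u w → edge v w → u = v
  isTree : (SimpleGraph.fromRel edge).IsTree

namespace DirectedTree

variable {V : Type} (T : DirectedTree V)

/-- The set of children of a vertex. -/
def chi (u : V) : Set V := {v | T.edge u v}

/-- `v` has a parent. -/
def HasParent (v : V) : Prop := ∃ u, T.edge u v

/-- `V⁰`: the set of non-root vertices, i.e. the vertices possessing a parent. -/
def Vcirc : Set V := {v | T.HasParent v}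

/-- The tree is leafless if every vertex has a child. -/
def Leafless : Prop := ∀ u : V, (T.chi u).Nonempty

/-- The parent of a vertex (junk value if the vertex is a root). -/
def par (v : V) : V := if h : T.HasParent v then h.choose else T.nonempty.some

/-- The set of descendants of a vertex. -/
def desc (u : V) : Set V := {w | Relation.ReflTransGen T.edge u w}

/-- The formal weighted shift map `Λ_T` acting on all complex functions on `V`. -/
def Lam (lam : V → ℂ) (f : V → ℂ) : V → ℂ :=
  fun v => if T.HasParent v then lam v * f (T.par v) else 0

/-- The domain of the weighted shift `S_λ`. -/
def domain (lam : V → ℂ) : Set (lp (fun _ : V => ℂ) 2) :=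
  {f | Memℓp (T.Lam lam ⇑f) 2}

/-- The weighted shift `S_λ` (extended by `0` outside its domain). -/
def shift (lam : V → ℂ) (f : lp (fun _ : V => ℂ) 2) : lp (fun _ : V => ℂ) 2 :=
  if h : f ∈ T.domain lam then (⟨T.Lam lam ⇑f, h⟩ : lp (fun _ : V => ℂ) 2) else 0

/-- The domain of `S_λ²`. -/
def squareDomain (lam : V → ℂ) : Set (lp (fun _ : V => ℂ) 2) :=
  {f | f ∈ T.domain lam ∧ T.shift lam f ∈ T.domain lam}

/-- The domain of the adjoint `S_λ*`. -/
def adjDomain (lam : V → ℂ) : Set (lp (fun _ : V => ℂ) 2) :=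
  {g | ∃ h : lp (fun _ : V => ℂ) 2,
    ∀ f ∈ T.domain lam, (inner ℂ (T.shift lam f) g : ℂ) = inner ℂ f h}

/-- `S_λ` is hyponormal: it is densely defined, `D(S_λ) ⊆ D(S_λ*)` and
`‖S_λ* f‖ ≤ ‖S_λ f‖` for every `f ∈ D(S_λ)` (the adjoint value at `f` being any vector
`h` satisfying `⟪S_λ g, f⟫ = ⟪g, h⟫` for all `g ∈ D(S_λ)`; it is unique by density). -/
def IsHyponormal (lam : V → ℂ) : Prop :=
  Dense (T.domain lam) ∧ T.domain lam ⊆ T.adjDomain lam ∧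
    ∀ f ∈ T.domain lam, ∀ h : lp (fun _ : V => ℂ) 2,
      (∀ g ∈ T.domain lam, (inner ℂ (T.shift lam g) f : ℂ) = inner ℂ g h) →
        ‖h‖ ≤ ‖T.shift lam f‖

/-- `ζ_u = (Σ_{v ∈ Chi(u)} |λ_v|²)^{1/2} ∈ [0,∞]`. -/
def zeta (lam : V → ℂ) (u : V) : ℝ≥0∞ :=
  (∑' v : T.chi u, ((‖lam (v : V)‖₊ : ℝ≥0∞)) ^ 2) ^ (1/2 : ℝ)

end DirectedTree


/-!
Both directions rest on linearity of `Λ_T`, which makes `D(S_λ)` a subspace. If every `e_u`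
lies in it, so does their span, which is dense in `ℓ²(V)`. Conversely, a dense domain contains
some `f` with `f u ≠ 0`; on the children `v` of `u` we have `(Λ_T f)(v) = λ_v f(u)`, so
`|(Λ_T e_u)(v)| ≤ |f(u)|⁻¹ |(Λ_T f)(v)|` everywhere and `Λ_T e_u` is square-summable.
-/

open scoped lp

theorem lp.dense_span_single (𝕜 ι : Type*) [RCLike 𝕜] :
    Dense (Submodule.span 𝕜 (Set.range fun i : ι => lp.single 2 i (1 : 𝕜)) : Set ℓ²(ι, 𝕜)) := by
  let b : HilbertBasis ι 𝕜 ℓ²(ι, 𝕜) := HilbertBasis.ofRepr (LinearIsometryEquiv.refl 𝕜 _)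
  have hb : ⇑b = fun i => lp.single 2 i (1 : 𝕜) :=
    funext fun i => (b.repr_symm_single i).symm
  exact Submodule.dense_iff_topologicalClosure_eq_top.mpr (hb ▸ b.dense_span)

namespace DirectedTree

variable {V : Type} (T : DirectedTree V) (lam : V → ℂ)

theorem par_eq_of_edge {u v : V} (h : T.edge u v) : T.par v = u := by
  have hv : T.HasParent v := ⟨u, h⟩
  rw [par, dif_pos hv]
  exact T.parent_unique _ _ _ hv.choose_spec h

theorem edge_par_of_hasParent {v : V} (hv : T.HasParent v) : T.edge (T.par v) v := by
  rw [par, dif_pos hv]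
  exact hv.choose_spec

theorem Lam_apply_of_edge (f : V → ℂ) {u v : V} (h : T.edge u v) :
    T.Lam lam f v = lam v * f u := by
  rw [Lam, if_pos ⟨u, h⟩, T.par_eq_of_edge h]

theorem Lam_single (u v : V) :
    T.Lam lam (lp.single 2 u (1 : ℂ)) v = if T.edge u v then lam v else 0 := by
  split_ifs with h
  · rw [T.Lam_apply_of_edge lam _ h, lp.single_apply_self, mul_one]
  · rw [Lam]
    split_ifs with hv
    · have hpar : T.par v ≠ u := fun hpu => h (hpu ▸ T.edge_par_of_hasParent hv)
      rw [lp.single_apply_ne 2 u _ hpar, mul_zero]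
    · rfl

theorem Lam_add (f g : V → ℂ) : T.Lam lam (f + g) = T.Lam lam f + T.Lam lam g := by
  funext v
  simp only [Lam, Pi.add_apply]
  split_ifs <;> ring

theorem Lam_smul (c : ℂ) (f : V → ℂ) : T.Lam lam (c • f) = c • T.Lam lam f := by
  funext v
  simp only [Lam, Pi.smul_apply, smul_eq_mul]
  split_ifs <;> ring

def domainSubmodule : Submodule ℂ ℓ²(V, ℂ) where
  carrier := T.domain lam
  zero_mem' := by
    show Memℓp (T.Lam lam ⇑(0 : ℓ²(V, ℂ))) 2
    rw [lp.coeFn_zero, show T.Lam lam 0 = 0 from funext fun v => by simp [Lam]]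
    exact zero_memℓp
  add_mem' {f g} hf hg := by
    show Memℓp (T.Lam lam _) 2
    rw [lp.coeFn_add, T.Lam_add]
    exact Memℓp.add hf hg
  smul_mem' c f hf := by
    show Memℓp (T.Lam lam _) 2
    rw [lp.coeFn_smul, T.Lam_smul]
    exact Memℓp.const_smul hf c

theorem single_mem_domain_of_apply_ne_zero {f : ℓ²(V, ℂ)} (hf : f ∈ T.domain lam) {u : V}
    (hfu : f u ≠ 0) : lp.single 2 u (1 : ℂ) ∈ T.domain lam := by
  refine Memℓp.mono' (Memℓp.const_smul hf (f u)⁻¹) fun v => ?_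
  rw [T.Lam_single, Pi.smul_apply]
  split_ifs with h
  · rw [T.Lam_apply_of_edge lam _ h, smul_eq_mul, inv_mul_eq_div, mul_div_cancel_right₀ _ hfu]
  · rw [norm_zero]
    positivity

theorem dense_domain_of_single_mem (h : ∀ u : V, lp.single 2 u (1 : ℂ) ∈ T.domain lam) :
    Dense (T.domain lam) := by
  have hspan : Submodule.span ℂ (Set.range fun u : V => lp.single 2 u (1 : ℂ))
      ≤ T.domainSubmodule lam :=
    Submodule.span_le.mpr (Set.range_subset_iff.mpr h)
  exact (lp.dense_span_single ℂ V).mono hspan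

theorem single_mem_domain_of_dense (hd : Dense (T.domain lam)) (u : V) :
    lp.single 2 u (1 : ℂ) ∈ T.domain lam := by
  have hopen : IsOpen {f : ℓ²(V, ℂ) | f u ≠ 0} :=
    isOpen_ne_fun (lp.evalCLM ℂ (fun _ : V => ℂ) 2 u).continuous continuous_const
  have hsingle : lp.single 2 u (1 : ℂ) ∈ {f : ℓ²(V, ℂ) | f u ≠ 0} := by simp
  obtain ⟨f, hf, hfu⟩ := hd.exists_mem_open hopen ⟨_, hsingle⟩
  exact T.single_mem_domain_of_apply_ne_zero lam hf hfu

end DirectedTree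

/-- Proposition 2.1(ii): `S_λ` is densely defined iff `e_u ∈ D(S_λ)` for every `u ∈ V`. -/
theorem stmt1 {V : Type} (T : DirectedTree V) (lam : V → ℂ) :
    Dense (T.domain lam) ↔ ∀ u : V, lp.single 2 u (1:ℂ) ∈ T.domain lam :=
  ⟨T.single_mem_domain_of_dense lam, T.dense_domain_of_single_mem lam⟩
end
end

section
/- Let T be a directed tree and let λ = {λ_v}_{v∈V°} be a family of nonzero complex numbers such that the weighted shift S_λ has dense domain in ℓ²(V) and D(S_λ²) = {0}. Then S_λ is injective. -/
open scoped ENNReal NNReal Classical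

noncomputable section

namespace DirectedTree

variable {V : Type} (T : DirectedTree V) (lam : V → ℂ)

theorem Lam_sub (f g : V → ℂ) : T.Lam lam (f - g) = T.Lam lam f - T.Lam lam g := by
  funext v
  by_cases hv : T.HasParent v <;> simp [Lam, hv, mul_sub]

theorem Lam_zero : T.Lam lam 0 = 0 := by
  simpa using T.Lam_sub lam 0 0

theorem coe_shift_of_mem_domain {f : lp (fun _ : V => ℂ) 2} (hf : f ∈ T.domain lam) :
    ⇑(T.shift lam f) = T.Lam lam ⇑f := by
  simp [shift, dif_pos hf]

theorem zero_mem_domain : (0 : lp (fun _ : V => ℂ) 2) ∈ T.domain lam := by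
  simp only [domain, Set.mem_ofPred_eq, lp.coeFn_zero, Lam_zero]
  exact zero_memℓp

theorem sub_mem_domain {f g : lp (fun _ : V => ℂ) 2} (hf : f ∈ T.domain lam)
    (hg : g ∈ T.domain lam) : f - g ∈ T.domain lam := by
  simp only [domain, Set.mem_ofPred_eq, lp.coeFn_sub, Lam_sub]
  exact hf.sub hg

theorem shift_sub {f g : lp (fun _ : V => ℂ) 2} (hf : f ∈ T.domain lam)
    (hg : g ∈ T.domain lam) : T.shift lam (f - g) = T.shift lam f - T.shift lam g := by
  ext1
  rw [lp.coeFn_sub, T.coe_shift_of_mem_domain lam (T.sub_mem_domain lam hf hg),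
    T.coe_shift_of_mem_domain lam hf, T.coe_shift_of_mem_domain lam hg, lp.coeFn_sub, Lam_sub]

theorem mem_squareDomain_of_shift_eq_zero {f : lp (fun _ : V => ℂ) 2}
    (hf : f ∈ T.domain lam) (h0 : T.shift lam f = 0) : f ∈ T.squareDomain lam :=
  ⟨hf, h0 ▸ T.zero_mem_domain lam⟩

end DirectedTree

theorem stmt9_general {V : Type} (T : DirectedTree V) (lam : V → ℂ)
    (hsq : T.squareDomain lam = ({0} : Set (lp (fun _ : V => ℂ) 2))) :
    Set.InjOn (T.shift lam) (T.domain lam) := by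
  intro f hf g hg hfg
  have hker : T.shift lam (f - g) = 0 := by
    rw [T.shift_sub lam hf hg, hfg, sub_self]
  have hsq' : f - g ∈ T.squareDomain lam :=
    T.mem_squareDomain_of_shift_eq_zero lam (T.sub_mem_domain lam hf hg) hker
  rw [hsq, Set.mem_singleton_iff] at hsq'
  exact sub_eq_zero.mp hsq'

/-- Theorem 3.1, "moreover": if the weights are nonzero, `S_λ` is densely defined and
`D(S_λ²) = {0}`, then `S_λ` is injective. -/
theorem stmt9 {V : Type} (T : DirectedTree V) (lam : V → ℂ)
    (hnz : ∀ v ∈ T.Vcirc, lam v ≠ 0) (hdense : Dense (T.domain lam))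
    (hsq : T.squareDomain lam = ({0} : Set (lp (fun _ : V => ℂ) 2))) :
    Set.InjOn (T.shift lam) (T.domain lam) :=
  stmt9_general T lam hsq
end
end
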